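/- arXiv:2509.12225 — 8 statements merged into one kernel-verified Lean document; each statement's English description precedes it below -/
import Mathlib

section
/- Fix an integer n ≥ 1, real parameters α, β, γ₁, γ₂ > 0, a public state e > 0, and coefficients θ : Fin n → ℝ. For each player i, an action is a pair (dᵢ, cᵢ) of real numbers (demand and consumption), and the payoff is rᵢ(d, c) = θᵢ·cᵢ − (α/(n·e + γ₁)·(Σⱼ dⱼ) + β/(e + γ₂))·dᵢ. Define φ̄(d, c) = Σᵢ θᵢ·cᵢ − (β/(e + γ₂))·Σᵢ dᵢ − (α/(n·e + γ₁))·(Σᵢ dᵢ² + Σ_{i<j} dᵢ·dⱼ). Then φ̄ is an exact potential: for every player i and every pair of profiles (d, c) and (d', c') that agree in all coordinates j ≠ i, one has rᵢ(d, c) − rᵢ(d', c') = φ̄(d, c) − φ̄(d', c'). -/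
/-- Payoff of player `i` in the single-stage smart-grid game:
`r_i(d, c) = θ_i c_i − (α/(n e + γ₁) · Σ_j d_j + β/(e + γ₂)) · d_i`. -/
noncomputable def stagePayoff (n : ℕ) (α β γ₁ γ₂ e : ℝ) (θ : Fin n → ℝ)
    (i : Fin n) (d c : Fin n → ℝ) : ℝ :=
  θ i * c i - (α / (n * e + γ₁) * (∑ j, d j) + β / (e + γ₂)) * d i

/-- The candidate exact potential
`φ̄(d, c) = Σ_i θ_i c_i − (β/(e+γ₂)) Σ_i d_i − (α/(n e + γ₁)) (Σ_i d_i² + Σ_{i<j} d_i d_j)`. -/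
noncomputable def stagePotential (n : ℕ) (α β γ₁ γ₂ e : ℝ) (θ : Fin n → ℝ)
    (d c : Fin n → ℝ) : ℝ :=
  (∑ i, θ i * c i) - β / (e + γ₂) * (∑ i, d i)
    - α / (n * e + γ₁) *
        ((∑ i, d i ^ 2)
          + ∑ p ∈ Finset.univ.filter (fun p : Fin n × Fin n => p.1 < p.2), d p.1 * d p.2)

lemma sq_sum_aux (n : ℕ) (d : Fin n → ℝ) :
    (∑ i, d i) ^ 2 = (∑ i, d i ^ 2)
      + 2 * ∑ p ∈ Finset.univ.filter (fun p : Fin n × Fin n => p.1 < p.2), d p.1 * d p.2 := by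
  have h : (∑ i, d i) ^ 2 = ∑ p ∈ (Finset.univ : Finset (Fin n × Fin n)), d p.1 * d p.2 := by
    rw [sq, Fintype.sum_mul_sum, ← Finset.univ_product_univ, Finset.sum_product]
  rw [h]
  rw [← Finset.sum_filter_add_sum_filter_not Finset.univ (fun p : Fin n × Fin n => p.1 < p.2)]
  have hswap : ∑ p ∈ Finset.univ.filter (fun p : Fin n × Fin n => ¬ p.1 < p.2), d p.1 * d p.2
      = (∑ i, d i ^ 2) + ∑ p ∈ Finset.univ.filter (fun p : Fin n × Fin n => p.1 < p.2), d p.1 * d p.2 := by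
    have : (Finset.univ.filter (fun p : Fin n × Fin n => ¬ p.1 < p.2))
        = (Finset.univ.filter (fun p : Fin n × Fin n => p.1 = p.2))
          ∪ (Finset.univ.filter (fun p : Fin n × Fin n => p.2 < p.1)) := by
      ext p
      simp [not_lt, le_iff_lt_or_eq, or_comm, eq_comm]
    rw [this, Finset.sum_union]
    · congr 1
      · rw [Finset.sum_filter]
        rw [← Finset.univ_product_univ, Finset.sum_product]
        simp [Finset.sum_ite_eq, sq]
      · apply Finset.sum_nbij' (fun p => Prod.swap p) (fun p => Prod.swap p) <;>
          simp [mul_comm]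
    · rw [Finset.disjoint_filter]
      intro p _ h1
      simp [h1]
  rw [hswap]; ring

/-- Lemma 1(1): the single-stage smart-grid game is an exact potential game with
potential `stagePotential`. -/
theorem stmt_0 (n : ℕ) (hn : 1 ≤ n) (α β γ₁ γ₂ e : ℝ)
    (hα : 0 < α) (hβ : 0 < β) (hγ₁ : 0 < γ₁) (hγ₂ : 0 < γ₂) (he : 0 < e)
    (θ : Fin n → ℝ) (i : Fin n) (d c d' c' : Fin n → ℝ)
    (hagree : ∀ j, j ≠ i → d j = d' j ∧ c j = c' j) :
    stagePayoff n α β γ₁ γ₂ e θ i d c - stagePayoff n α β γ₁ γ₂ e θ i d' c'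
      = stagePotential n α β γ₁ γ₂ e θ d c - stagePotential n α β γ₁ γ₂ e θ d' c' := by
  have hc : ∑ j, θ j * c j = (∑ j, θ j * c' j) + (θ i * c i - θ i * c' i) := by
    have : ∑ j, (θ j * c j - θ j * c' j) = θ i * c i - θ i * c' i :=
      Finset.sum_eq_single_of_mem i (Finset.mem_univ i)
        (fun j _ hj => by rw [(hagree j hj).2]; ring)
    rw [← this, Finset.sum_sub_distrib]; ring
  have hd : ∑ j, d j = (∑ j, d' j) + (d i - d' i) := by
    have : ∑ j, (d j - d' j) = d i - d' i :=
      Finset.sum_eq_single_of_mem i (Finset.mem_univ i)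
        (fun j _ hj => by rw [(hagree j hj).1]; ring)
    rw [← this, Finset.sum_sub_distrib]; ring
  have hsq : ∑ j, d j ^ 2 = (∑ j, d' j ^ 2) + (d i ^ 2 - d' i ^ 2) := by
    have : ∑ j, (d j ^ 2 - d' j ^ 2) = d i ^ 2 - d' i ^ 2 :=
      Finset.sum_eq_single_of_mem i (Finset.mem_univ i)
        (fun j _ hj => by rw [(hagree j hj).1]; ring)
    rw [← this, Finset.sum_sub_distrib]; ring
  have hp : ∀ f : Fin n → ℝ,
      ∑ p ∈ Finset.univ.filter (fun p : Fin n × Fin n => p.1 < p.2), f p.1 * f p.2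
        = ((∑ j, f j) ^ 2 - ∑ j, f j ^ 2) / 2 := by
    intro f
    have := sq_sum_aux n f
    linarith
  simp only [stagePayoff, stagePotential, hp d, hp d']
  rw [hc, hsq, hd]
  ring
end

section
/- Fix an integer n ≥ 1, real parameters α, β, γ₁, γ₂ > 0, a public state e > 0, and coefficients θ : Fin n → ℝ. In the reduced demand game each player i chooses a real demand dᵢ and receives payoff gᵢ(d) = θᵢ·dᵢ − (α/(n·e + γ₁)·(Σⱼ dⱼ) + β/(e + γ₂))·dᵢ. Define φ(e, d) = Σᵢ (θᵢ − β/(e + γ₂))·dᵢ − (α/(n·e + γ₁))·(Σᵢ dᵢ² + Σ_{i<j} dᵢ·dⱼ). Then φ(e, ·) is an exact potential for the reduced demand game: for every player i and all demand profiles d, d' agreeing in every coordinate j ≠ i, gᵢ(d) − gᵢ(d') = φ(e, d) − φ(e, d'). -/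
lemma pair_diff {n : ℕ} (i : Fin n) (d d' : Fin n → ℝ)
    (h : ∀ j, j ≠ i → d j = d' j) :
    (∑ p ∈ Finset.univ.filter (fun p : Fin n × Fin n => p.1 < p.2), d p.1 * d p.2)
      - (∑ p ∈ Finset.univ.filter (fun p : Fin n × Fin n => p.1 < p.2), d' p.1 * d' p.2)
      = (d i - d' i) * ∑ j ∈ Finset.univ.erase i, d j := by
  classical
  rw [← Finset.sum_sub_distrib]
  rw [← Finset.sum_filter_add_sum_filter_not _
      (fun p : Fin n × Fin n => p.1 = i ∨ p.2 = i)]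
  have h2 : ∑ p ∈ (Finset.univ.filter (fun p : Fin n × Fin n => p.1 < p.2)).filter
      (fun p => ¬(p.1 = i ∨ p.2 = i)), (d p.1 * d p.2 - d' p.1 * d' p.2) = 0 := by
    apply Finset.sum_eq_zero
    intro p hp
    simp only [Finset.mem_filter, not_or] at hp
    rw [h p.1 hp.2.1, h p.2 hp.2.2]
    ring
  rw [h2, add_zero, Finset.mul_sum]
  apply Finset.sum_nbij' (fun p : Fin n × Fin n => if p.1 = i then p.2 else p.1)
    (fun j : Fin n => if i < j then (i, j) else (j, i))
  · intro p hp
    simp only [Finset.mem_filter, Finset.mem_univ, true_and] at hp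
    simp only [Finset.mem_erase, Finset.mem_univ, and_true]
    rcases hp.2 with h1 | h1
    · simp [h1]; omega
    · rw [if_neg]
      · omega
      · omega
  · intro j hj
    simp only [Finset.mem_erase, Finset.mem_univ, and_true] at hj
    simp only [Finset.mem_filter, Finset.mem_univ, true_and]
    rcases lt_or_gt_of_ne hj with h1 | h1
    · rw [if_neg (by omega)]; exact ⟨h1, Or.inr rfl⟩
    · rw [if_pos h1]; exact ⟨h1, Or.inl rfl⟩
  · intro p hp
    simp only [Finset.mem_filter, Finset.mem_univ, true_and] at hp
    obtain ⟨hlt, hi⟩ := hp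
    rcases hi with h1 | h1
    · subst h1; rw [if_pos rfl, if_pos hlt]
    · subst h1
      rw [if_neg (ne_of_lt hlt), if_neg (not_lt.mpr hlt.le)]
  · intro j hj
    simp only [Finset.mem_erase, Finset.mem_univ, and_true] at hj
    rcases lt_or_gt_of_ne hj with h1 | h1
    · rw [if_neg (not_lt.mpr h1.le)]; simp [hj]
    · rw [if_pos h1]; simp
  · intro p hp
    simp only [Finset.mem_filter, Finset.mem_univ, true_and] at hp
    rcases hp.2 with h1 | h1
    · rw [if_pos h1, h1, h p.2 (by omega)]; ring
    · rw [if_neg (by omega), h1, h p.1 (by omega)]; ring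


/-- Payoff of player `i` in the reduced demand game:
`g_i(d) = θ_i d_i − (α/(n e + γ₁) · Σ_j d_j + β/(e + γ₂)) · d_i`. -/
noncomputable def demandPayoff (n : ℕ) (α β γ₁ γ₂ e : ℝ) (θ : Fin n → ℝ)
    (i : Fin n) (d : Fin n → ℝ) : ℝ :=
  θ i * d i - (α / (n * e + γ₁) * (∑ j, d j) + β / (e + γ₂)) * d i

/-- The stage-wise potential
`φ(e, d) = Σ_i (θ_i − β/(e+γ₂)) d_i − (α/(n e + γ₁)) (Σ_i d_i² + Σ_{i<j} d_i d_j)`. -/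
noncomputable def demandPotential (n : ℕ) (α β γ₁ γ₂ : ℝ) (θ : Fin n → ℝ)
    (e : ℝ) (d : Fin n → ℝ) : ℝ :=
  (∑ i, (θ i - β / (e + γ₂)) * d i)
    - α / (n * e + γ₁) *
        ((∑ i, d i ^ 2)
          + ∑ p ∈ Finset.univ.filter (fun p : Fin n × Fin n => p.1 < p.2), d p.1 * d p.2)

/-- The stage-wise potential structure of the reduced demand game:
`φ(e, ·)` is an exact potential for the payoffs `g_i`. -/
theorem stmt_1 (n : ℕ) (hn : 1 ≤ n) (α β γ₁ γ₂ e : ℝ)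
    (hα : 0 < α) (hβ : 0 < β) (hγ₁ : 0 < γ₁) (hγ₂ : 0 < γ₂) (he : 0 < e)
    (θ : Fin n → ℝ) (i : Fin n) (d d' : Fin n → ℝ)
    (hagree : ∀ j, j ≠ i → d j = d' j) :
    demandPayoff n α β γ₁ γ₂ e θ i d - demandPayoff n α β γ₁ γ₂ e θ i d'
      = demandPotential n α β γ₁ γ₂ θ e d - demandPotential n α β γ₁ γ₂ θ e d' := by
  classical
  have hb := pair_diff i d d' hagree
  have hS' : (∑ j ∈ Finset.univ.erase i, d' j) = ∑ j ∈ Finset.univ.erase i, d j :=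
    Finset.sum_congr rfl fun j hj => (hagree j (Finset.ne_of_mem_erase hj)).symm
  have h1 : ∑ j, d j = d i + ∑ j ∈ Finset.univ.erase i, d j :=
    (Finset.add_sum_erase _ d (Finset.mem_univ i)).symm
  have h2 : ∑ j, d' j = d' i + ∑ j ∈ Finset.univ.erase i, d j := by
    rw [← hS']; exact (Finset.add_sum_erase _ d' (Finset.mem_univ i)).symm
  have hsq' : (∑ j ∈ Finset.univ.erase i, d' j ^ 2) = ∑ j ∈ Finset.univ.erase i, d j ^ 2 :=
    Finset.sum_congr rfl fun j hj => by rw [hagree j (Finset.ne_of_mem_erase hj)]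
  have h3 : ∑ j, d j ^ 2 = d i ^ 2 + ∑ j ∈ Finset.univ.erase i, d j ^ 2 :=
    (Finset.add_sum_erase _ (fun j => d j ^ 2) (Finset.mem_univ i)).symm
  have h4 : ∑ j, d' j ^ 2 = d' i ^ 2 + ∑ j ∈ Finset.univ.erase i, d j ^ 2 := by
    rw [← hsq']; exact (Finset.add_sum_erase _ (fun j => d' j ^ 2) (Finset.mem_univ i)).symm
  have hθ' : (∑ j ∈ Finset.univ.erase i, (θ j - β / (e + γ₂)) * d' j)
      = ∑ j ∈ Finset.univ.erase i, (θ j - β / (e + γ₂)) * d j :=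
    Finset.sum_congr rfl fun j hj => by rw [hagree j (Finset.ne_of_mem_erase hj)]
  have h5 : ∑ j, (θ j - β / (e + γ₂)) * d j
      = (θ i - β / (e + γ₂)) * d i + ∑ j ∈ Finset.univ.erase i, (θ j - β / (e + γ₂)) * d j :=
    (Finset.add_sum_erase _ _ (Finset.mem_univ i)).symm
  have h6 : ∑ j, (θ j - β / (e + γ₂)) * d' j
      = (θ i - β / (e + γ₂)) * d' i + ∑ j ∈ Finset.univ.erase i, (θ j - β / (e + γ₂)) * d j := by
    rw [← hθ']; exact (Finset.add_sum_erase _ _ (Finset.mem_univ i)).symm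
  simp only [demandPayoff, demandPotential]
  rw [h1, h2, h3, h4, h5, h6]
  linear_combination (α / (n * e + γ₁)) * hb
end

section
/- Fix an integer n ≥ 1, real parameters α, β, γ₁, γ₂ > 0, a public state e > 0, and coefficients θ : Fin n → ℝ with θᵢ > 0 for all i. For a storage vector b : Fin n → ℝ consider the single-stage game in which player i chooses (dᵢ, cᵢ) with dᵢ ∈ Dᵢ (a nonempty finite set of reals) and cᵢ in a nonempty finite feasible set whose greatest element is bᵢ + dᵢ, with payoff uᵢ(d, c) = θᵢ·cᵢ − (α/(n·e + γ₁)·(Σⱼ dⱼ) + β/(e + γ₂))·dᵢ. Then the pure equilibrium demands depend only on e and not on b: if (d*, c*) is a pure Nash equilibrium of the game with storage vector b, then for any other storage vector b' (with feasible consumption sets whose greatest elements are b'ᵢ + dᵢ), the profile (d*, c') with c'ᵢ = b'ᵢ + d*ᵢ is a pure Nash equilibrium of the game with storage vector b'. -/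
/-- Payoff of player `i` in the single-stage game with consumption:
`u_i(d, c) = θ_i c_i − (α/(n e + γ₁) · Σ_j d_j + β/(e + γ₂)) · d_i`. -/
noncomputable def fullPayoff (n : ℕ) (α β γ₁ γ₂ e : ℝ) (θ : Fin n → ℝ)
    (i : Fin n) (d c : Fin n → ℝ) : ℝ :=
  θ i * c i - (α / (n * e + γ₁) * (∑ j, d j) + β / (e + γ₂)) * d i

/-- Lemma 1(2): the pure equilibrium demands of the single-stage game depend only on the
public state `e` and not on the storage vector: if `(d*, c*)` is a pure Nash equilibrium
of the game with storage `b`, then `(d*, c')` with `c'_i = b'_i + d*_i` is a pure Nash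
equilibrium of the game with storage `b'`. -/
theorem stmt_4 (n : ℕ) (hn : 1 ≤ n) (α β γ₁ γ₂ e : ℝ)
    (hα : 0 < α) (hβ : 0 < β) (hγ₁ : 0 < γ₁) (hγ₂ : 0 < γ₂) (he : 0 < e)
    (θ : Fin n → ℝ) (hθ : ∀ i, 0 < θ i) (b b' : Fin n → ℝ)
    (D : Fin n → Finset ℝ) (hD : ∀ i, (D i).Nonempty)
    (C : Fin n → ℝ → Finset ℝ)
    (hCmem : ∀ i, ∀ d ∈ D i, b i + d ∈ C i d)
    (hCtop : ∀ i, ∀ d ∈ D i, ∀ c ∈ C i d, c ≤ b i + d)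
    (C' : Fin n → ℝ → Finset ℝ)
    (hC'mem : ∀ i, ∀ d ∈ D i, b' i + d ∈ C' i d)
    (hC'top : ∀ i, ∀ d ∈ D i, ∀ c ∈ C' i d, c ≤ b' i + d)
    (dstar cstar : Fin n → ℝ)
    (hds : ∀ i, dstar i ∈ D i) (hcs : ∀ i, cstar i ∈ C i (dstar i))
    (hNE : ∀ i : Fin n, ∀ d' ∈ D i, ∀ c' ∈ C i d',
      fullPayoff n α β γ₁ γ₂ e θ i (Function.update dstar i d') (Function.update cstar i c')
        ≤ fullPayoff n α β γ₁ γ₂ e θ i dstar cstar) :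
    ∀ i : Fin n, ∀ d' ∈ D i, ∀ c' ∈ C' i d',
      fullPayoff n α β γ₁ γ₂ e θ i (Function.update dstar i d')
          (Function.update (fun j => b' j + dstar j) i c')
        ≤ fullPayoff n α β γ₁ γ₂ e θ i dstar (fun j => b' j + dstar j) := by
  intro i d' hd' c' hc'
  have h1 := hNE i d' hd' (b i + d') (hCmem i d' hd')
  have hcb : cstar i ≤ b i + dstar i := hCtop i (dstar i) (hds i) (cstar i) (hcs i)
  have hc'b : c' ≤ b' i + d' := hC'top i d' hd' c' hc'
  have hθi := hθ i
  simp only [fullPayoff, Function.update_self] at h1 ⊢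
  nlinarith [h1, mul_le_mul_of_nonneg_left hcb (le_of_lt hθi),
    mul_le_mul_of_nonneg_left hc'b (le_of_lt hθi)]
end

section
/- Let each of n players have a nonempty finite action set Aᵢ and payoff uᵢ : (Π_j Aⱼ) → ℝ, and let φ : (Π_j Aⱼ) → ℝ. A mixed strategy of player i is a function mᵢ : Aᵢ → ℝ with nonnegative values summing to 1; define the multilinear extensions Uᵢ(m) = Σ_{a ∈ ΠAⱼ} (Π_j mⱼ(aⱼ))·uᵢ(a) and Φ(m) = Σ_{a ∈ ΠAⱼ} (Π_j mⱼ(aⱼ))·φ(a). Then φ is an exact potential in pure strategies (uᵢ(x) − uᵢ(x') = φ(x) − φ(x') whenever x, x' agree in all coordinates j ≠ i) if and only if Φ is an exact potential in mixed strategies: for every player i, all mixed strategies mᵢ, m'ᵢ of player i, and every mixed profile m₋ᵢ of the others, Uᵢ(mᵢ, m₋ᵢ) − Uᵢ(m'ᵢ, m₋ᵢ) = Φ(mᵢ, m₋ᵢ) − Φ(m'ᵢ, m₋ᵢ). -/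
open Finset

private lemma delta_sum {n : ℕ} {A : Fin n → Type} [∀ i, Fintype (A i)]
    [∀ j, DecidableEq (A j)] (x : ∀ j, A j) (f : (∀ j, A j) → ℝ) :
    ∑ a : ∀ j, A j, (∏ j, if a j = x j then (1:ℝ) else 0) * f a = f x := by
  rw [Finset.sum_eq_single x]
  · simp
  · intro a _ ha
    obtain ⟨j, hj⟩ : ∃ j, a j ≠ x j := by
      by_contra h
      push_neg at h
      exact ha (funext h)
    rw [Finset.prod_eq_zero (Finset.mem_univ j) (by simp [hj]), zero_mul]
  · intro h
    exact absurd (Finset.mem_univ x) h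

private lemma swap_sum {n : ℕ} {A : Fin n → Type} [∀ i, Fintype (A i)]
    (i : Fin n) (m : ∀ j, A j → ℝ) (m' : A i → ℝ)
    (hm : (∑ a, m i a) = 1) (hm' : (∑ a, m' a) = 1)
    (g : (∀ j, A j) → ℝ) (hg : ∀ x b, g (Function.update x i b) = g x) :
    (∑ a : ∀ j, A j, (∏ j, m j (a j)) * g a)
      = ∑ a : ∀ j, A j, (∏ j, Function.update m i m' j (a j)) * g a := by
  classical
  have hinv : Function.Involutive
      (fun p : (∀ j, A j) × A i => (Function.update p.1 i p.2, p.1 i)) := by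
    intro p
    refine Prod.ext ?_ ?_ <;>
      simp [Function.update_idem, Function.update_eq_self]
  have hx : ∀ X : ℝ, (∑ y : A i, m' y * X) = X := fun X => by
    rw [← Finset.sum_mul, hm', one_mul]
  have hx' : ∀ X : ℝ, (∑ y : A i, m i y * X) = X := fun X => by
    rw [← Finset.sum_mul, hm, one_mul]
  have step1 : (∑ a : ∀ j, A j, (∏ j, m j (a j)) * g a)
      = ∑ p : (∀ j, A j) × A i, m' p.2 * ((∏ j, m j (p.1 j)) * g p.1) := by
    rw [Fintype.sum_prod_type]
    exact Finset.sum_congr rfl fun a _ => (hx ((∏ j, m j (a j)) * g a)).symm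
  have step2 : (∑ a : ∀ j, A j, (∏ j, Function.update m i m' j (a j)) * g a)
      = ∑ p : (∀ j, A j) × A i,
          m i p.2 * ((∏ j, Function.update m i m' j (p.1 j)) * g p.1) := by
    rw [Fintype.sum_prod_type]
    exact Finset.sum_congr rfl fun a _ =>
      (hx' ((∏ j, Function.update m i m' j (a j)) * g a)).symm
  rw [step1, step2]
  refine Fintype.sum_equiv hinv.toPerm _ _ fun p => ?_
  obtain ⟨a, b⟩ := p
  simp only [Function.Involutive.coe_toPerm]
  show m' b * ((∏ j, m j (a j)) * g a)
      = m i (a i) *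
        ((∏ j, Function.update m i m' j (Function.update a i b j)) * g (Function.update a i b))
  have p1 : (∏ j, m j (a j)) = m i (a i) * ∏ j ∈ univ \ {i}, m j (a j) :=
    Finset.prod_eq_mul_prod_sdiff_singleton_of_mem (Finset.mem_univ i) _
  have p2 : (∏ j, Function.update m i m' j (Function.update a i b j))
      = m' b * ∏ j ∈ univ \ {i}, m j (a j) := by
    rw [Finset.prod_eq_mul_prod_sdiff_singleton_of_mem (Finset.mem_univ i)
      (fun j => Function.update m i m' j (Function.update a i b j))]
    simp only [Function.update_self]
    congr 1
    refine Finset.prod_congr rfl fun j hj => ?_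
    have hji : j ≠ i := by
      simp only [Finset.mem_sdiff, Finset.mem_singleton] at hj
      exact hj.2
    rw [Function.update_of_ne hji, Function.update_of_ne hji]
  rw [p1, p2, hg]
  ring

/-- Lemma 2(1): for a finite strategic-form game, `φ` is an exact potential in pure
strategies iff its multilinear extension is an exact potential in mixed strategies. -/
theorem stmt_5 (n : ℕ) (A : Fin n → Type) [∀ i, Fintype (A i)] [∀ i, Nonempty (A i)]
    (u : Fin n → (∀ j, A j) → ℝ) (φ : (∀ j, A j) → ℝ) :
    (∀ (i : Fin n) (x x' : ∀ j, A j), (∀ j, j ≠ i → x j = x' j) →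
        u i x - u i x' = φ x - φ x')
      ↔ (∀ (i : Fin n) (m : ∀ j, A j → ℝ),
          (∀ j, (∀ a, 0 ≤ m j a) ∧ (∑ a, m j a) = 1) →
          ∀ m' : A i → ℝ, (∀ a, 0 ≤ m' a) → (∑ a, m' a) = 1 →
            (∑ a : ∀ j, A j, (∏ j, m j (a j)) * u i a)
                - (∑ a : ∀ j, A j, (∏ j, Function.update m i m' j (a j)) * u i a)
              = (∑ a : ∀ j, A j, (∏ j, m j (a j)) * φ a)
                - (∑ a : ∀ j, A j, (∏ j, Function.update m i m' j (a j)) * φ a)) := by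
  classical
  constructor
  · intro h i m hm m' _ hm'1
    have hg : ∀ x (b : A i), (u i (Function.update x i b) - φ (Function.update x i b))
        = u i x - φ x := by
      intro x b
      have := h i (Function.update x i b) x (fun j hj => Function.update_of_ne hj _ _)
      linarith
    have key := swap_sum i m m' (hm i).2 hm'1 (fun a => u i a - φ a) hg
    simp only [mul_sub, Finset.sum_sub_distrib] at key
    linarith
  · intro h i x x' hxx'
    set m : ∀ j, A j → ℝ := fun j a => if a = x j then 1 else 0 with hmdef
    set m' : A i → ℝ := fun a => if a = x' i then 1 else 0 with hm'def
    have hmprop : ∀ j, (∀ a, 0 ≤ m j a) ∧ (∑ a, m j a) = 1 := by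
      intro j
      constructor
      · intro a; dsimp [m]; split <;> norm_num
      · simp [m]
    have key := h i m hmprop m' (by intro a; dsimp [m']; split <;> norm_num) (by simp [m'])
    have hupd : ∀ (a : ∀ j, A j) j, Function.update m i m' j (a j)
        = if a j = x' j then (1:ℝ) else 0 := by
      intro a j
      rcases eq_or_ne j i with rfl | hj
      · simp [m']
      · rw [Function.update_of_ne hj]
        simp [m, hxx' j hj]
    have rw1 : ∀ f : (∀ j, A j) → ℝ,
        (∑ a : ∀ j, A j, (∏ j, Function.update m i m' j (a j)) * f a) = f x' := by
      intro f
      rw [← delta_sum x' f]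
      refine Finset.sum_congr rfl fun a _ => ?_
      congr 1
      exact Finset.prod_congr rfl fun j _ => hupd a j
    have rw2 : ∀ f : (∀ j, A j) → ℝ,
        (∑ a : ∀ j, A j, (∏ j, m j (a j)) * f a) = f x := fun f => delta_sum x f
    rw [rw1, rw1, rw2, rw2] at key
    exact key
end

section
/- Let K be a nonempty finite index set, w : K → ℝ a weight function, and for each i ∈ Fin n let Dᵢ be a nonempty action set. Suppose for each k ∈ K a strategic game on the action sets Dᵢ is given by payoffs uᵢ(k, ·) : (Π_j Dⱼ) → ℝ together with an exact potential φ(k, ·) : (Π_j Dⱼ) → ℝ (for each k, unilateral deviations by player i change uᵢ(k, ·) by exactly the change in φ(k, ·)). Consider the contingent game in which a strategy of player i is a map xᵢ : K → Dᵢ and the payoff is Uᵢ(x) = Σ_{k ∈ K} w(k)·uᵢ(k, x(k)), where x(k) = (xⱼ(k))ⱼ. Then Φ(x) = Σ_{k ∈ K} w(k)·φ(k, x(k)) is an exact potential for the contingent game: if x and x' agree in the strategies of all players j ≠ i, then Uᵢ(x) − Uᵢ(x') = Φ(x) − Φ(x'). Moreover, if each Dᵢ is finite, the contingent game has a pure Nash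 equilibrium. -/
/-- A weighted sum of stage-wise exact potentials is an exact potential of the contingent
game (strategies are maps `K → Dᵢ`, payoffs are weighted sums of stage payoffs); moreover,
if each action set is finite, the contingent game has a pure Nash equilibrium. -/
theorem stmt_11 (n : ℕ) (K : Type) [Fintype K] [Nonempty K] (w : K → ℝ)
    (D : Fin n → Type) [∀ i, Nonempty (D i)]
    (u : Fin n → K → (∀ j, D j) → ℝ) (φ : K → (∀ j, D j) → ℝ)
    (hpot : ∀ (k : K) (i : Fin n) (x x' : ∀ j, D j), (∀ j, j ≠ i → x j = x' j) →
      u i k x - u i k x' = φ k x - φ k x') :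
    (∀ (i : Fin n) (x x' : ∀ j, K → D j), (∀ j, j ≠ i → x j = x' j) →
        (∑ k, w k * u i k (fun j => x j k)) - (∑ k, w k * u i k (fun j => x' j k))
          = (∑ k, w k * φ k (fun j => x j k)) - (∑ k, w k * φ k (fun j => x' j k))) ∧
      ((∀ i, Finite (D i)) →
        ∃ xs : ∀ j, K → D j, ∀ (i : Fin n) (xi : K → D i),
          (∑ k, w k * u i k (fun j => Function.update xs i xi j k))
            ≤ ∑ k, w k * u i k (fun j => xs j k)) := by
  have key : ∀ (i : Fin n) (x x' : ∀ j, K → D j), (∀ j, j ≠ i → x j = x' j) →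
      (∑ k, w k * u i k (fun j => x j k)) - (∑ k, w k * u i k (fun j => x' j k))
        = (∑ k, w k * φ k (fun j => x j k)) - (∑ k, w k * φ k (fun j => x' j k)) := by
    intro i x x' h
    rw [← Finset.sum_sub_distrib, ← Finset.sum_sub_distrib]
    refine Finset.sum_congr rfl fun k _ => ?_
    rw [← mul_sub, ← mul_sub, hpot k i _ _ (fun j hj => by rw [h j hj])]
  refine ⟨key, fun hfin => ?_⟩
  have : ∀ j, Finite (K → D j) := fun j => inferInstance
  obtain ⟨xs, hxs⟩ := Finite.exists_max (fun x : ∀ j, K → D j =>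
    ∑ k, w k * φ k (fun j => x j k))
  refine ⟨xs, fun i xi => ?_⟩
  have h := key i (fun j => Function.update xs i xi j) xs
    (fun j hj => Function.update_of_ne hj _ _)
  have h2 := hxs (fun j => Function.update xs i xi j)
  linarith
end

section
/- Fix integers T ≥ 1 and n ≥ 1, reals α, β, γ₁, γ₂ > 0, and θ : Fin n → ℝ. For each t ∈ {1, …, T} let E_t be a nonempty finite set of positive reals (public states), let Q_t be row-stochastic matrices from E_t to E_{t+1} for t < T, and let each Dᵢ ⊆ ℝ be a nonempty finite demand set. A strategy of player i is a map xᵢ assigning to each pair (t, e) with e ∈ E_t a demand xᵢ(t, e) ∈ Dᵢ. For an initial state e¹ ∈ E₁, let μ₁ be the point mass at e¹ and μ_{t+1} = μ_t·Q_t, and define V̂ᵢ(x; e¹) = Σ_{t=1}^{T} Σ_{e ∈ E_t} μ_t(e)·gᵢ(e, x(t, e)) with gᵢ(e, d) = θᵢ·dᵢ − (α·(Σⱼ dⱼ)/(n·e + γ₁) + β/(e + γ₂))·dᵢ, and Φ(x; e¹) = Σ_{t=1}^{T} Σ_{e ∈ E_t} μ_t(e)·φ(e, x(t, e)) with φ(e,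 d) = Σᵢ (θᵢ − β/(e + γ₂))·dᵢ − (α/(n·e + γ₁))·(Σᵢ dᵢ² + Σ_{i<j} dᵢ·dⱼ). Then: (i) for every e¹ ∈ E₁, Φ(·; e¹) is an exact potential, i.e., if strategy profiles x and x' agree for all players j ≠ i then V̂ᵢ(x; e¹) − V̂ᵢ(x'; e¹) = Φ(x; e¹) − Φ(x'; e¹); and (ii) there exists a pure strategy profile x* that is a Nash equilibrium of this game simultaneously for every initial state e¹ ∈ E₁: for all i, all xᵢ, and all e¹ ∈ E₁, V̂ᵢ(x*; e¹) ≥ V̂ᵢ((xᵢ, x*₋ᵢ); e¹). -/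
/-- The stage payoff of the auxiliary demand game `G2`:
`g_i(e, d) = θ_i d_i − (α (Σ_j d_j)/(n e + γ₁) + β/(e + γ₂)) d_i`. -/
noncomputable def g2Payoff (n : ℕ) (α β γ₁ γ₂ : ℝ) (θ : Fin n → ℝ)
    (i : Fin n) (e : ℝ) (d : Fin n → ℝ) : ℝ :=
  θ i * d i - (α * (∑ j, d j) / (n * e + γ₁) + β / (e + γ₂)) * d i

/-- The stage-wise potential
`φ(e, d) = Σ_i (θ_i − β/(e+γ₂)) d_i − (α/(n e + γ₁)) (Σ_i d_i² + Σ_{i<j} d_i d_j)`. -/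
noncomputable def g2Potential (n : ℕ) (α β γ₁ γ₂ : ℝ) (θ : Fin n → ℝ)
    (e : ℝ) (d : Fin n → ℝ) : ℝ :=
  (∑ i, (θ i - β / (e + γ₂)) * d i)
    - α / (n * e + γ₁) *
        ((∑ i, d i ^ 2)
          + ∑ p ∈ Finset.univ.filter (fun p : Fin n × Fin n => p.1 < p.2), d p.1 * d p.2)

/-- The state distribution of the action-independent public chain: `μ 1` is the point
mass at `e1`, and `μ (t+1) = μ t · Q t`. -/
noncomputable def pubDist (E : ℕ → Finset ℝ) (Q : ℕ → ℝ → ℝ → ℝ) (e1 : ℝ) :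
    ℕ → ℝ → ℝ
  | 0, _ => 0
  | 1, e => if e = e1 then 1 else 0
  | t + 2, e' => ∑ e ∈ E (t + 1), pubDist E Q e1 (t + 1) e * Q (t + 1) e e'

/-- Value of player `i` in the auxiliary game `G2` from initial public state `e1`:
`V̂ᵢ(x; e¹) = Σ_{t=1}^{T} Σ_{e ∈ E_t} μ_t(e) · gᵢ(e, x(t, e))`. -/
noncomputable def g2Value (T n : ℕ) (α β γ₁ γ₂ : ℝ) (θ : Fin n → ℝ)
    (E : ℕ → Finset ℝ) (Q : ℕ → ℝ → ℝ → ℝ) (i : Fin n)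
    (x : Fin n → ℕ → ℝ → ℝ) (e1 : ℝ) : ℝ :=
  ∑ t ∈ Finset.Icc 1 T, ∑ e ∈ E t,
    pubDist E Q e1 t e * g2Payoff n α β γ₁ γ₂ θ i e (fun j => x j t e)

/-- Total potential of the auxiliary game `G2` from initial public state `e1`:
`Φ(x; e¹) = Σ_{t=1}^{T} Σ_{e ∈ E_t} μ_t(e) · φ(e, x(t, e))`. -/
noncomputable def g2TotalPotential (T n : ℕ) (α β γ₁ γ₂ : ℝ) (θ : Fin n → ℝ)
    (E : ℕ → Finset ℝ) (Q : ℕ → ℝ → ℝ → ℝ)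
    (x : Fin n → ℕ → ℝ → ℝ) (e1 : ℝ) : ℝ :=
  ∑ t ∈ Finset.Icc 1 T, ∑ e ∈ E t,
    pubDist E Q e1 t e * g2Potential n α β γ₁ γ₂ θ e (fun j => x j t e)

lemma aux_halfSq (n : ℕ) (d : Fin n → ℝ) :
    (∑ p ∈ Finset.univ.filter (fun p : Fin n × Fin n => p.1 < p.2), d p.1 * d p.2)
      = ((∑ j, d j) ^ 2 - ∑ j, d j ^ 2) / 2 := by
  have htot : (∑ j, d j) ^ 2 = ∑ p : Fin n × Fin n, d p.1 * d p.2 := by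
    rw [sq, Finset.sum_mul_sum]
    exact (Fintype.sum_prod_type (fun p : Fin n × Fin n => d p.1 * d p.2)).symm
  have hsplit := Finset.sum_filter_add_sum_filter_not (Finset.univ : Finset (Fin n × Fin n))
      (fun p => p.1 < p.2) (fun p => d p.1 * d p.2)
  have hsplit2 := Finset.sum_filter_add_sum_filter_not
      (Finset.univ.filter (fun p : Fin n × Fin n => ¬ p.1 < p.2))
      (fun p => p.2 < p.1) (fun p => d p.1 * d p.2)
  have hgt : (Finset.univ.filter (fun p : Fin n × Fin n => ¬ p.1 < p.2)).filter
      (fun p => p.2 < p.1) = Finset.univ.filter (fun p : Fin n × Fin n => p.2 < p.1) := by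
    rw [Finset.filter_filter]
    apply Finset.filter_congr
    intro p _
    simp only [Fin.lt_def]
    omega
  have heqf : (Finset.univ.filter (fun p : Fin n × Fin n => ¬ p.1 < p.2)).filter
      (fun p => ¬ p.2 < p.1) = Finset.univ.filter (fun p : Fin n × Fin n => p.1 = p.2) := by
    rw [Finset.filter_filter]
    apply Finset.filter_congr
    intro p _
    simp only [Fin.lt_def, Fin.ext_iff]
    omega
  have hdiag : ∑ p ∈ Finset.univ.filter (fun p : Fin n × Fin n => p.1 = p.2),
      d p.1 * d p.2 = ∑ j, d j ^ 2 := by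
    simp [Finset.sum_filter, Fintype.sum_prod_type, sq]
  have hswap : ∑ p ∈ Finset.univ.filter (fun p : Fin n × Fin n => p.2 < p.1), d p.1 * d p.2
      = ∑ p ∈ Finset.univ.filter (fun p : Fin n × Fin n => p.1 < p.2), d p.1 * d p.2 := by
    refine Finset.sum_nbij' (fun p => Prod.swap p) (fun p => Prod.swap p) ?_ ?_ ?_ ?_ ?_ <;>
      simp [mul_comm]
  rw [hgt, heqf, hdiag, hswap] at hsplit2
  rw [← hsplit2] at hsplit
  rw [← hsplit] at htot
  linarith

lemma aux_key (n : ℕ) (α β γ₁ γ₂ : ℝ) (θ : Fin n → ℝ) (i : Fin n) (e : ℝ)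
    (d d' : Fin n → ℝ) (h : ∀ j, j ≠ i → d j = d' j) :
    g2Payoff n α β γ₁ γ₂ θ i e d - g2Payoff n α β γ₁ γ₂ θ i e d'
      = g2Potential n α β γ₁ γ₂ θ e d - g2Potential n α β γ₁ γ₂ θ e d' := by
  have hs : ∑ j ∈ Finset.univ.erase i, d j = ∑ j ∈ Finset.univ.erase i, d' j :=
    Finset.sum_congr rfl fun j hj => h j (Finset.mem_erase.mp hj).1
  have hq : ∑ j ∈ Finset.univ.erase i, d j ^ 2 = ∑ j ∈ Finset.univ.erase i, d' j ^ 2 :=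
    Finset.sum_congr rfl fun j hj => by rw [h j (Finset.mem_erase.mp hj).1]
  have hw : ∑ j ∈ Finset.univ.erase i, (θ j - β / (e + γ₂)) * d j
      = ∑ j ∈ Finset.univ.erase i, (θ j - β / (e + γ₂)) * d' j :=
    Finset.sum_congr rfl fun j hj => by rw [h j (Finset.mem_erase.mp hj).1]
  simp only [g2Payoff, g2Potential, aux_halfSq]
  rw [← Finset.add_sum_erase _ (fun j => d j ^ 2) (Finset.mem_univ i),
      ← Finset.add_sum_erase _ (fun j => d' j ^ 2) (Finset.mem_univ i),
      ← Finset.add_sum_erase _ (fun j => (θ j - β / (e + γ₂)) * d j) (Finset.mem_univ i),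
      ← Finset.add_sum_erase _ (fun j => (θ j - β / (e + γ₂)) * d' j) (Finset.mem_univ i),
      ← Finset.add_sum_erase _ d (Finset.mem_univ i),
      ← Finset.add_sum_erase _ d' (Finset.mem_univ i),
      hs, hq, hw]
  ring

lemma aux_pubDist_nonneg (T : ℕ) (E : ℕ → Finset ℝ) (Q : ℕ → ℝ → ℝ → ℝ)
    (hQnn : ∀ t, 1 ≤ t → t < T → ∀ e ∈ E t, ∀ e' ∈ E (t + 1), 0 ≤ Q t e e')
    (e1 : ℝ) : ∀ t, 1 ≤ t → t ≤ T → ∀ e ∈ E t, 0 ≤ pubDist E Q e1 t e := by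
  intro t
  induction t with
  | zero => omega
  | succ s ih =>
    rcases s with _ | s'
    · intro _ _ e _
      simp only [pubDist]
      split <;> norm_num
    · intro h1 h2 e' he'
      show 0 ≤ ∑ e ∈ E (s' + 1), pubDist E Q e1 (s' + 1) e * Q (s' + 1) e e'
      refine Finset.sum_nonneg fun e he => mul_nonneg (ih (by omega) (by omega) e he)
        (hQnn (s' + 1) (by omega) (by omega) e he e' he')

lemma aux_pot (T n : ℕ) (α β γ₁ γ₂ : ℝ) (θ : Fin n → ℝ) (E : ℕ → Finset ℝ)
    (Q : ℕ → ℝ → ℝ → ℝ) (e1 : ℝ) (i : Fin n) (x x' : Fin n → ℕ → ℝ → ℝ)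
    (hagree : ∀ j, j ≠ i → x j = x' j) :
    g2Value T n α β γ₁ γ₂ θ E Q i x e1 - g2Value T n α β γ₁ γ₂ θ E Q i x' e1
      = g2TotalPotential T n α β γ₁ γ₂ θ E Q x e1
        - g2TotalPotential T n α β γ₁ γ₂ θ E Q x' e1 := by
  simp only [g2Value, g2TotalPotential, ← Finset.sum_sub_distrib]
  refine Finset.sum_congr rfl fun t _ => Finset.sum_congr rfl fun e _ => ?_
  rw [← mul_sub, ← mul_sub,
    aux_key n α β γ₁ γ₂ θ i e _ _ (fun j hj => by rw [hagree j hj])]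

/-- Theorem 2 of the paper: the auxiliary game `G2` is a Markov potential game with
state-dependent potential `Φ(·; e¹)`, and it has a pure strategy profile that is a Nash
equilibrium simultaneously for every initial public state `e¹ ∈ E₁`. -/
theorem stmt_13 (T n : ℕ) (hT : 1 ≤ T) (hn : 1 ≤ n)
    (α β γ₁ γ₂ : ℝ) (hα : 0 < α) (hβ : 0 < β) (hγ₁ : 0 < γ₁) (hγ₂ : 0 < γ₂)
    (θ : Fin n → ℝ)
    (E : ℕ → Finset ℝ)
    (hEne : ∀ t, 1 ≤ t → t ≤ T → (E t).Nonempty)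
    (hEpos : ∀ t, 1 ≤ t → t ≤ T → ∀ e ∈ E t, (0:ℝ) < e)
    (Q : ℕ → ℝ → ℝ → ℝ)
    (hQnn : ∀ t, 1 ≤ t → t < T → ∀ e ∈ E t, ∀ e' ∈ E (t + 1), 0 ≤ Q t e e')
    (hQrow : ∀ t, 1 ≤ t → t < T → ∀ e ∈ E t, (∑ e' ∈ E (t + 1), Q t e e') = 1)
    (D : Fin n → Finset ℝ) (hD : ∀ i, (D i).Nonempty) :
    (∀ e1 ∈ E 1, ∀ (i : Fin n) (x x' : Fin n → ℕ → ℝ → ℝ),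
        (∀ j t, 1 ≤ t → t ≤ T → ∀ e ∈ E t, x j t e ∈ D j) →
        (∀ j t, 1 ≤ t → t ≤ T → ∀ e ∈ E t, x' j t e ∈ D j) →
        (∀ j, j ≠ i → x j = x' j) →
        g2Value T n α β γ₁ γ₂ θ E Q i x e1 - g2Value T n α β γ₁ γ₂ θ E Q i x' e1
          = g2TotalPotential T n α β γ₁ γ₂ θ E Q x e1
            - g2TotalPotential T n α β γ₁ γ₂ θ E Q x' e1) ∧
      (∃ xs : Fin n → ℕ → ℝ → ℝ,
        (∀ j t, 1 ≤ t → t ≤ T → ∀ e ∈ E t, xs j t e ∈ D j) ∧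
        ∀ (i : Fin n) (xi : ℕ → ℝ → ℝ),
          (∀ t, 1 ≤ t → t ≤ T → ∀ e ∈ E t, xi t e ∈ D i) →
          ∀ e1 ∈ E 1,
            g2Value T n α β γ₁ γ₂ θ E Q i (Function.update xs i xi) e1
              ≤ g2Value T n α β γ₁ γ₂ θ E Q i xs e1) := by
  constructor
  · intro e1 _ i x x' _ _ hagree
    exact aux_pot T n α β γ₁ γ₂ θ E Q e1 i x x' hagree
  · have hS : (Fintype.piFinset D).Nonempty := Fintype.piFinset_nonempty.mpr hD
    choose dstar hmem hmax using fun e : ℝ =>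
      Finset.exists_max_image (Fintype.piFinset D) (g2Potential n α β γ₁ γ₂ θ e) hS
    refine ⟨fun j t e => dstar e j, fun j t _ _ e _ => Fintype.mem_piFinset.mp (hmem e) j, ?_⟩
    intro i xi hxi e1 he1
    have hpot := aux_pot T n α β γ₁ γ₂ θ E Q e1 i
      (Function.update (fun j t e => dstar e j) i xi) (fun j t e => dstar e j)
      (fun j hj => Function.update_of_ne hj _ _)
    have hle : g2TotalPotential T n α β γ₁ γ₂ θ E Q
        (Function.update (fun j t e => dstar e j) i xi) e1
        ≤ g2TotalPotential T n α β γ₁ γ₂ θ E Q (fun j t e => dstar e j) e1 := by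
      refine Finset.sum_le_sum fun t ht => Finset.sum_le_sum fun e he => ?_
      obtain ⟨ht1, ht2⟩ := Finset.mem_Icc.mp ht
      refine mul_le_mul_of_nonneg_left ?_
        (aux_pubDist_nonneg T E Q hQnn e1 t ht1 ht2 e he)
      refine hmax e _ ?_
      rw [Fintype.mem_piFinset]
      intro j
      by_cases hji : j = i
      · subst hji
        simpa using hxi t ht1 ht2 e he
      · rw [Function.update_of_ne hji]
        exact Fintype.mem_piFinset.mp (hmem e) j
    linarith
end

section
/- Fix reals α, β, γ₁, γ₂ > 0, n = 2, public states e¹, e² > 0, and opponents' demands D¹, D² ≥ 0. Define the price p(e, s) = α·s/(n·e + γ₁) + β/(e + γ₂) and the utility H(x) = 0.9·x if x ≤ 2 and H(x) = 1.8 if x > 2. Assume condition C1: α·(5 + D¹)/(n·e¹ + γ₁) + β/(e¹ + γ₂) < 0.9 and α·(3 + D²)/(n·e² + γ₁) + β/(e² + γ₂) > 0.9. Then for all d¹, d² ∈ {1, 2, 3}: H(2) − 3·p(e¹, 3 + D¹) + H(2) − p(e², 1 + D²) > H(d¹) − d¹·p(e¹, d¹ + D¹) + H(d²) − d²·p(e²,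 d² + D²). -/
set_option maxHeartbeats 1000000


/-- The price `p(e, s) = α s/(n e + γ₁) + β/(e + γ₂)` with `n = 2`. -/
noncomputable def price2 (α β γ₁ γ₂ e s : ℝ) : ℝ :=
  α * s / (2 * e + γ₁) + β / (e + γ₂)

/-- The piecewise-linear consumption utility `H(x) = 0.9 x` for `x ≤ 2`, `H(x) = 1.8`
otherwise. -/
noncomputable def utilityH (x : ℝ) : ℝ :=
  if x ≤ 2 then 0.9 * x else 1.8

/-- Example 4 (storage dominance): under condition C1, the storage strategy (buy 3 and
consume 2 at stage 1, buy 1 and consume 2 at stage 2) yields strictly higher total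
instantaneous reward than every non-storage strategy `d¹, d² ∈ {1, 2, 3}`. -/
theorem stmt_14 (α β γ₁ γ₂ e1 e2 D1 D2 : ℝ)
    (hα : 0 < α) (hβ : 0 < β) (hγ₁ : 0 < γ₁) (hγ₂ : 0 < γ₂)
    (he1 : 0 < e1) (he2 : 0 < e2) (hD1 : 0 ≤ D1) (hD2 : 0 ≤ D2)
    (hC1a : α * (5 + D1) / (2 * e1 + γ₁) + β / (e1 + γ₂) < 0.9)
    (hC1b : 0.9 < α * (3 + D2) / (2 * e2 + γ₁) + β / (e2 + γ₂)) :
    ∀ d1 ∈ ({1, 2, 3} : Set ℝ), ∀ d2 ∈ ({1, 2, 3} : Set ℝ),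
      utilityH d1 - d1 * price2 α β γ₁ γ₂ e1 (d1 + D1)
          + (utilityH d2 - d2 * price2 α β γ₁ γ₂ e2 (d2 + D2))
        < utilityH 2 - 3 * price2 α β γ₁ γ₂ e1 (3 + D1)
          + (utilityH 2 - price2 α β γ₁ γ₂ e2 (1 + D2)) := by
  have hx1 : (0:ℝ) < 2 * e1 + γ₁ := by linarith
  have hy1 : (0:ℝ) < e1 + γ₂ := by linarith
  have hx2 : (0:ℝ) < 2 * e2 + γ₁ := by linarith
  have hy2 : (0:ℝ) < e2 + γ₂ := by linarith
  set a1 : ℝ := α / (2 * e1 + γ₁) with ha1def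
  set b1 : ℝ := β / (e1 + γ₂) with hb1def
  set a2 : ℝ := α / (2 * e2 + γ₁) with ha2def
  set b2 : ℝ := β / (e2 + γ₂) with hb2def
  have ha1 : 0 < a1 := div_pos hα hx1
  have hb1 : 0 < b1 := div_pos hβ hy1
  have ha2 : 0 < a2 := div_pos hα hx2
  have hb2 : 0 < b2 := div_pos hβ hy2
  have hp1 : ∀ s : ℝ, price2 α β γ₁ γ₂ e1 s = a1 * s + b1 := by
    intro s; rw [price2, ha1def, hb1def]; ring
  have hp2 : ∀ s : ℝ, price2 α β γ₁ γ₂ e2 s = a2 * s + b2 := by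
    intro s; rw [price2, ha2def, hb2def]; ring
  have hA : a1 * (5 + D1) + b1 < 0.9 := by
    have := hC1a; rw [show α * (5 + D1) / (2 * e1 + γ₁) = a1 * (5 + D1) by
      rw [ha1def]; ring] at this; linarith
  have hB : 0.9 < a2 * (3 + D2) + b2 := by
    have := hC1b; rw [show α * (3 + D2) / (2 * e2 + γ₁) = a2 * (3 + D2) by
      rw [ha2def]; ring] at this; linarith
  intro d1 hd1 d2 hd2
  simp only [Set.mem_insert_iff, Set.mem_singleton_iff] at hd1 hd2
  rcases hd1 with rfl | rfl | rfl <;> rcases hd2 with rfl | rfl | rfl <;>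
    simp only [hp1, hp2, utilityH] <;> norm_num <;> nlinarith [mul_nonneg ha1.le hD1,
      mul_nonneg ha2.le hD2, ha1.le, ha2.le, hb1.le, hb2.le]
end

section
/- In the lower-level Markov game G1 defined in the context, there exists a pure private Markovian equilibrium; moreover, it can be chosen of the form π*ᵢ(t, e, bᵢ) = (d*ᵢ(t, e), d*ᵢ(t, e) + bᵢ), where the equilibrium demand d*ᵢ(t, e) ∈ Dᵢ depends only on the time t and the public state e, and the consumption equals demand plus current storage. That is, there is a profile π* of pure private Markovian strategies of this form such that for every player i, every (behavioral) private Markovian strategy πᵢ of player i, every t = 1 initial state s¹ = (e¹, b¹) ∈ E₁ × Π_j B_j, the value satisfies V^{π*}_{1,i}(s¹) ≥ V^{(πᵢ, π*₋ᵢ)}_{1,i}(s¹). -/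
open scoped Classical

/-- Feasibility of an action `a = (d, c)` of a player with bounds `dmax, bmax, cmax`
at storage level `b`: `d ≤ dmax`, `c ≤ cmax` and `b + d − bmax ≤ c ≤ b + d`. -/
def feasibleAct (dmax bmax cmax : ℕ) (b : ℕ) (a : ℕ × ℕ) : Prop :=
  a.1 ≤ dmax ∧ a.2 ≤ cmax ∧ b + a.1 - bmax ≤ a.2 ∧ a.2 ≤ b + a.1

/-- The box `{0, …, dmax} × {0, …, cmax}` of demand–consumption pairs. -/
def actionBox (dmax cmax : ℕ) : Finset (ℕ × ℕ) :=
  Finset.range (dmax + 1) ×ˢ Finset.range (cmax + 1)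

/-- Stage payoff of player `i` in the Markov game `G1`:
`r_i(s, a) = θ_i c_i − (α (Σ_j d_j)/(n e + γ₁) + β/(e + γ₂)) d_i`. -/
noncomputable def stageRewardG1 (n : ℕ) (α β γ₁ γ₂ : ℝ) (θ : Fin n → ℝ)
    (i : Fin n) (e : ℝ) (a : Fin n → ℕ × ℕ) : ℝ :=
  θ i * ((a i).2 : ℝ)
    - (α * (∑ j, ((a j).1 : ℝ)) / (n * e + γ₁) + β / (e + γ₂)) * ((a i).1 : ℝ)

/-- The value function of player `i` in `G1` under a behavioral private Markovian
strategy profile `π`, defined by backward recursion on the number of remaining stages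
(first argument): `value π i k t e b` is the expected total payoff of `i` over stages
`t, t+1, …, t+k−1` starting at state `(e, b)`; storage evolves by `b' = b + d − c`,
and the public state moves by the action-independent kernel `Q`. -/
noncomputable def valueG1 (n : ℕ) (α β γ₁ γ₂ : ℝ) (θ : Fin n → ℝ)
    (E : ℕ → Finset ℝ) (Q : ℕ → ℝ → ℝ → ℝ) (dmax cmax : Fin n → ℕ)
    (π : Fin n → ℕ → ℝ → ℕ → ℕ × ℕ → ℝ) (i : Fin n) :
    ℕ → ℕ → ℝ → (Fin n → ℕ) → ℝ
  | 0, _, _, _ => 0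
  | k + 1, t, e, b =>
      ∑ a ∈ Fintype.piFinset (fun j => actionBox (dmax j) (cmax j)),
        (∏ j, π j t e (b j) (a j)) *
          (stageRewardG1 n α β γ₁ γ₂ θ i e a
            + ∑ e' ∈ E (t + 1),
                Q t e e' *
                  valueG1 n α β γ₁ γ₂ θ E Q dmax cmax π i k (t + 1) e'
                    (fun j => b j + (a j).1 - (a j).2))

/-- `πi` is a (behavioral) private Markovian strategy of player `i`: at every time
`t ∈ {1, …, T}`, public state `e ∈ E t` and private storage `b ≤ bmax i`, it is a
probability distribution supported on the feasible actions. -/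
def IsPMS (T n : ℕ) (E : ℕ → Finset ℝ) (dmax bmax cmax : Fin n → ℕ) (i : Fin n)
    (πi : ℕ → ℝ → ℕ → ℕ × ℕ → ℝ) : Prop :=
  ∀ t, 1 ≤ t → t ≤ T → ∀ e ∈ E t, ∀ b : ℕ, b ≤ bmax i →
    (∀ a, 0 ≤ πi t e b a) ∧
    (∀ a, ¬ feasibleAct (dmax i) (bmax i) (cmax i) b a → πi t e b a = 0) ∧
    (∑ a ∈ (actionBox (dmax i) (cmax i)).filter
        (fun a => feasibleAct (dmax i) (bmax i) (cmax i) b a), πi t e b a) = 1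

/-- The pure private Markovian strategy induced by a demand rule `x : time → public
state → demand`: play `(x t e, x t e + b)`, i.e. consume demand plus current storage. -/
noncomputable def purePMS (x : ℕ → ℝ → ℕ) : ℕ → ℝ → ℕ → ℕ × ℕ → ℝ :=
  fun t e b a => if a = (x t e, x t e + b) then 1 else 0



noncomputable def utilN (n : ℕ) (α β γ₁ γ₂ : ℝ) (θ : Fin n → ℝ) (i : Fin n) (e : ℝ)
    (d : Fin n → ℕ) : ℝ :=
  θ i * (d i : ℝ) - (α * (∑ j, (d j : ℝ)) / (n * e + γ₁) + β / (e + γ₂)) * (d i : ℝ)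

noncomputable def potG1 (n : ℕ) (α β γ₁ γ₂ : ℝ) (θ : Fin n → ℝ) (e : ℝ)
    (d : Fin n → ℕ) : ℝ :=
  (∑ j, θ j * (d j : ℝ)) - (β / (e + γ₂)) * (∑ j, (d j : ℝ))
    - (α / (n * e + γ₁)) * ((∑ j, (d j : ℝ))^2 + ∑ j, (d j : ℝ)^2) / 2

lemma potG1_diff (n : ℕ) (α β γ₁ γ₂ : ℝ) (θ : Fin n → ℝ) (e : ℝ) (d : Fin n → ℕ)
    (i : Fin n) (m : ℕ) :
    potG1 n α β γ₁ γ₂ θ e (Function.update d i m) - potG1 n α β γ₁ γ₂ θ e d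
      = utilN n α β γ₁ γ₂ θ i e (Function.update d i m) - utilN n α β γ₁ γ₂ θ i e d := by
  classical
  have key : ∀ (c : Fin n → ℝ) (v : ℝ),
      (∑ j, (if j = i then v else c j)) = v + ∑ j ∈ Finset.univ.erase i, c j := by
    intro c v
    rw [← Finset.add_sum_erase _ _ (Finset.mem_univ i)]
    rw [if_pos rfl]
    congr 1
    exact Finset.sum_congr rfl (fun j hj => by rw [if_neg (Finset.ne_of_mem_erase hj)])
  have h1 : (∑ j, θ j * ((Function.update d i m j : ℕ) : ℝ))
      = θ i * (m:ℝ) + ∑ j ∈ Finset.univ.erase i, θ j * (d j : ℝ) := by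
    rw [← key]
    refine Finset.sum_congr rfl fun j _ => ?_
    by_cases h : j = i
    · subst h; simp
    · simp [Function.update_of_ne h, h]
  have h2 : (∑ j, ((Function.update d i m j : ℕ) : ℝ))
      = (m:ℝ) + ∑ j ∈ Finset.univ.erase i, (d j : ℝ) := by
    rw [← key]
    refine Finset.sum_congr rfl fun j _ => ?_
    by_cases h : j = i
    · subst h; simp
    · simp [Function.update_of_ne h, h]
  have h3 : (∑ j, ((Function.update d i m j : ℕ) : ℝ)^2)
      = (m:ℝ)^2 + ∑ j ∈ Finset.univ.erase i, (d j : ℝ)^2 := by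
    rw [← key]
    refine Finset.sum_congr rfl fun j _ => ?_
    by_cases h : j = i
    · subst h; simp
    · simp [Function.update_of_ne h, h]
  have hd1 : (∑ j, θ j * (d j : ℝ))
      = θ i * (d i : ℝ) + ∑ j ∈ Finset.univ.erase i, θ j * (d j : ℝ) :=
    (Finset.add_sum_erase _ _ (Finset.mem_univ i)).symm
  have hd2 : (∑ j, (d j : ℝ)) = (d i : ℝ) + ∑ j ∈ Finset.univ.erase i, (d j : ℝ) :=
    (Finset.add_sum_erase _ _ (Finset.mem_univ i)).symm
  have hd3 : (∑ j, (d j : ℝ)^2) = (d i : ℝ)^2 + ∑ j ∈ Finset.univ.erase i, (d j : ℝ)^2 :=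
    (Finset.add_sum_erase _ _ (Finset.mem_univ i)).symm
  simp only [utilN, potG1, h1, h2, h3, hd1, hd2, hd3, Function.update_self]
  ring

lemma sum_piFinset_update (n : ℕ) (S : Fin n → Finset (ℕ × ℕ)) (w : Fin n → ℕ × ℕ → ℝ)
    (ap : Fin n → ℕ × ℕ) (i : Fin n)
    (hw : ∀ j, j ≠ i → ∀ aj, w j aj = if aj = ap j then 1 else 0)
    (hap : ∀ j, ap j ∈ S j) (g : (Fin n → ℕ × ℕ) → ℝ) :
    ∑ a ∈ Fintype.piFinset S, (∏ j, w j (a j)) * g a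
      = ∑ ai ∈ S i, w i ai * g (Function.update ap i ai) := by
  classical
  set φ : ℕ × ℕ → (Fin n → ℕ × ℕ) := fun ai => Function.update ap i ai with hφ
  have hinj : ∀ x ∈ S i, ∀ y ∈ S i, φ x = φ y → x = y := by
    intro x _ y _ h
    have := congrFun h i
    simpa [φ] using this
  have hsub : Finset.image φ (S i) ⊆ Fintype.piFinset S := by
    intro a ha
    rw [Finset.mem_image] at ha
    obtain ⟨ai, hai, rfl⟩ := ha
    rw [Fintype.mem_piFinset]
    intro j
    by_cases h : j = i
    · subst h; simpa [φ] using hai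
    · simpa [φ, Function.update_of_ne h] using hap j
  rw [← Finset.sum_subset hsub ?hvanish, Finset.sum_image hinj]
  · refine Finset.sum_congr rfl fun ai _ => ?_
    congr 1
    rw [Finset.prod_eq_single i]
    · simp [φ]
    · intro j _ hj
      rw [hw j hj]
      simp [φ, Function.update_of_ne hj]
    · simp
  case hvanish =>
    intro a ha hna
    have hex : ∃ j, j ≠ i ∧ a j ≠ ap j := by
      by_contra hcon
      push_neg at hcon
      apply hna
      rw [Finset.mem_image]
      refine ⟨a i, (Fintype.mem_piFinset.mp ha) i, ?_⟩
      funext j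
      by_cases h : j = i
      · subst h; simp [φ]
      · simp [φ, Function.update_of_ne h, hcon j h]
    obtain ⟨j, hji, hne⟩ := hex
    have h0 : w j (a j) = 0 := by rw [hw j hji]; simp [hne]
    rw [Finset.prod_eq_zero (Finset.mem_univ j) h0, zero_mul]
noncomputable def Fval (n : ℕ) (α β γ₁ γ₂ : ℝ) (θ : Fin n → ℝ) (E : ℕ → Finset ℝ)
    (Q : ℕ → ℝ → ℝ → ℝ) (x : Fin n → ℕ → ℝ → ℕ) (i : Fin n) : ℕ → ℕ → ℝ → ℝ
  | 0, _, _ => 0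
  | k + 1, t, e =>
      utilN n α β γ₁ γ₂ θ i e (fun j => x j t e)
        + ∑ e' ∈ E (t + 1), Q t e e' * Fval n α β γ₁ γ₂ θ E Q x i k (t + 1) e'

lemma apmem (n : ℕ) (dmax bmax cmax : Fin n → ℕ) (hcmax : ∀ i, dmax i + bmax i ≤ cmax i)
    (x : Fin n → ℕ → ℝ → ℕ) (hx : ∀ i t e, x i t e ≤ dmax i) (t : ℕ) (e : ℝ)
    (b : Fin n → ℕ) (hb : ∀ j, b j ≤ bmax j) (j : Fin n) :
    (x j t e, x j t e + b j) ∈ actionBox (dmax j) (cmax j) := by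
  have := hx j t e; have := hb j; have := hcmax j
  simp only [actionBox, Finset.mem_product, Finset.mem_range]
  omega

lemma pureValueG1 (n : ℕ) (α β γ₁ γ₂ : ℝ) (θ : Fin n → ℝ) (E : ℕ → Finset ℝ)
    (Q : ℕ → ℝ → ℝ → ℝ) (dmax bmax cmax : Fin n → ℕ)
    (hcmax : ∀ i, dmax i + bmax i ≤ cmax i)
    (x : Fin n → ℕ → ℝ → ℕ) (hx : ∀ i t e, x i t e ≤ dmax i) (i : Fin n) :
    ∀ k t e (b : Fin n → ℕ), (∀ j, b j ≤ bmax j) →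
      valueG1 n α β γ₁ γ₂ θ E Q dmax cmax (fun j => purePMS (x j)) i k t e b
        = if k = 0 then 0
          else θ i * (b i : ℝ) + Fval n α β γ₁ γ₂ θ E Q x i k t e := by
  intro k
  induction k with
  | zero => intro t e b hb; simp [valueG1]
  | succ k ih =>
    intro t e b hb
    rw [valueG1]
    have hcol := sum_piFinset_update n (fun j => actionBox (dmax j) (cmax j))
      (fun j aj => purePMS (x j) t e (b j) aj)
      (fun j => (x j t e, x j t e + b j)) i
      (fun j _ aj => rfl) (apmem n dmax bmax cmax hcmax x hx t e b hb)
      (fun a => stageRewardG1 n α β γ₁ γ₂ θ i e a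
        + ∑ e' ∈ E (t + 1), Q t e e' *
            valueG1 n α β γ₁ γ₂ θ E Q dmax cmax (fun j => purePMS (x j)) i k (t + 1) e'
              (fun j => b j + (a j).1 - (a j).2))
    rw [hcol]
    simp only [purePMS, ite_mul, one_mul, zero_mul]
    rw [Finset.sum_ite_eq', if_pos (apmem n dmax bmax cmax hcmax x hx t e b hb i),
      Function.update_eq_self]
    have hb0 : (fun j => b j + ((x j t e, x j t e + b j) : ℕ × ℕ).1
        - ((x j t e, x j t e + b j) : ℕ × ℕ).2) = fun _ => (0:ℕ) := by
      funext j; simp; omega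
    rw [hb0]
    have hval : ∀ e', valueG1 n α β γ₁ γ₂ θ E Q dmax cmax (fun j => purePMS (x j)) i
        k (t+1) e' (fun _ => 0) = Fval n α β γ₁ γ₂ θ E Q x i k (t+1) e' := by
      intro e'
      rw [ih (t+1) e' (fun _ => 0) (fun j => Nat.zero_le _)]
      cases k with
      | zero => simp [Fval]
      | succ k => simp
    simp only [hval]
    rw [if_neg (Nat.succ_ne_zero k), Fval]
    have hstage : stageRewardG1 n α β γ₁ γ₂ θ i e (fun j => (x j t e, x j t e + b j))
        = θ i * (b i : ℝ) + utilN n α β γ₁ γ₂ θ i e (fun j => x j t e) := by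
      simp only [stageRewardG1, utilN]
      push_cast
      ring
    rw [hstage]
    ring
lemma devValueG1 (T n : ℕ) (α β γ₁ γ₂ : ℝ) (θ : Fin n → ℝ) (hθ : ∀ i, 0 ≤ θ i)
    (E : ℕ → Finset ℝ) (Q : ℕ → ℝ → ℝ → ℝ)
    (hQnn : ∀ t, 1 ≤ t → t < T → ∀ e ∈ E t, ∀ e' ∈ E (t + 1), 0 ≤ Q t e e')
    (hQrow : ∀ t, 1 ≤ t → t < T → ∀ e ∈ E t, (∑ e' ∈ E (t + 1), Q t e e') = 1)
    (dmax bmax cmax : Fin n → ℕ) (hcmax : ∀ i, dmax i + bmax i ≤ cmax i)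
    (x : Fin n → ℕ → ℝ → ℕ) (hx : ∀ i t e, x i t e ≤ dmax i) (i : Fin n)
    (hNE : ∀ (t : ℕ) (e : ℝ) (m : ℕ), m ≤ dmax i →
      utilN n α β γ₁ γ₂ θ i e (Function.update (fun j => x j t e) i m)
        ≤ utilN n α β γ₁ γ₂ θ i e (fun j => x j t e))
    (πi : ℕ → ℝ → ℕ → ℕ × ℕ → ℝ) (hπ : IsPMS T n E dmax bmax cmax i πi) :
    ∀ k t, 1 ≤ t → t + k = T + 1 → ∀ e ∈ E t, ∀ b : Fin n → ℕ, (∀ j, b j ≤ bmax j) →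
      valueG1 n α β γ₁ γ₂ θ E Q dmax cmax
          (Function.update (fun j => purePMS (x j)) i πi) i k t e b
        ≤ θ i * (b i : ℝ) + Fval n α β γ₁ γ₂ θ E Q x i k t e := by
  intro k
  induction k with
  | zero =>
    intro t h1 hk e he b hb
    have : (0:ℝ) ≤ θ i * (b i : ℝ) := mul_nonneg (hθ i) (Nat.cast_nonneg _)
    simp only [valueG1, Fval]
    linarith
  | succ k ih =>
    intro t h1 hk e he b hb
    have htT : t ≤ T := by omega
    obtain ⟨hnn, hzero, hsum⟩ := hπ t h1 htT e he (b i) (hb i)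
    set π' := Function.update (fun j => purePMS (x j)) i πi with hπ'
    rw [valueG1]
    have hcol := sum_piFinset_update n (fun j => actionBox (dmax j) (cmax j))
      (fun j aj => π' j t e (b j) aj)
      (fun j => (x j t e, x j t e + b j)) i
      (fun j hj aj => by
        show π' j t e (b j) aj = _
        rw [hπ', Function.update_of_ne hj]
        rfl)
      (apmem n dmax bmax cmax hcmax x hx t e b hb)
      (fun a => stageRewardG1 n α β γ₁ γ₂ θ i e a
        + ∑ e' ∈ E (t + 1), Q t e e' *
            valueG1 n α β γ₁ γ₂ θ E Q dmax cmax π' i k (t + 1) e'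
              (fun j => b j + (a j).1 - (a j).2))
    rw [hcol]
    have hπ'i : ∀ aj, π' i t e (b i) aj = πi t e (b i) aj := by
      intro aj; rw [hπ', Function.update_self]
    simp only [hπ'i]
    -- restrict to feasible actions
    rw [← Finset.sum_subset
      (Finset.filter_subset (fun a => feasibleAct (dmax i) (bmax i) (cmax i) (b i) a)
        (actionBox (dmax i) (cmax i)))
      (fun ai hai hnot => by
        rw [hzero ai (fun hf => hnot (Finset.mem_filter.mpr ⟨hai, hf⟩)), zero_mul])]
    -- bound each feasible term
    have hbound : ∀ ai ∈ (actionBox (dmax i) (cmax i)).filter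
        (fun a => feasibleAct (dmax i) (bmax i) (cmax i) (b i) a),
        stageRewardG1 n α β γ₁ γ₂ θ i e
            (Function.update (fun j => (x j t e, x j t e + b j)) i ai)
          + ∑ e' ∈ E (t + 1), Q t e e' *
              valueG1 n α β γ₁ γ₂ θ E Q dmax cmax π' i k (t + 1) e'
                (fun j => b j + ((Function.update (fun j => (x j t e, x j t e + b j)) i ai) j).1
                  - ((Function.update (fun j => (x j t e, x j t e + b j)) i ai) j).2)
        ≤ θ i * (b i : ℝ) + Fval n α β γ₁ γ₂ θ E Q x i (k+1) t e := by
      intro ai hai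
      obtain ⟨hbox, hfeas⟩ := Finset.mem_filter.mp hai
      obtain ⟨hd, hc, hlo, hhi⟩ := hfeas
      set ap : Fin n → ℕ × ℕ := fun j => (x j t e, x j t e + b j) with hap
      set a' := Function.update ap i ai with ha'
      set b'' : Fin n → ℕ := fun j => b j + (a' j).1 - (a' j).2 with hb''
      have ha'i : a' i = ai := Function.update_self i ai ap
      have hb''i : b'' i = b i + ai.1 - ai.2 := by rw [hb'']; simp [ha'i]
      have hb''j : ∀ j, j ≠ i → b'' j = 0 := by
        intro j hj
        rw [hb'']
        simp only [ha', Function.update_of_ne hj, hap]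
        omega
      have hb''le : ∀ j, b'' j ≤ bmax j := by
        intro j
        by_cases hj : j = i
        · subst hj; rw [hb''i]; omega
        · rw [hb''j j hj]; exact Nat.zero_le _
      -- the demand profile after deviation
      have hsum1 : (∑ j, ((a' j).1 : ℝ))
          = ∑ j, ((Function.update (fun j => x j t e) i ai.1 j : ℕ) : ℝ) := by
        refine Finset.sum_congr rfl fun j _ => ?_
        by_cases hj : j = i
        · subst hj; rw [ha'i, Function.update_self]
        · rw [ha', Function.update_of_ne hj, Function.update_of_ne hj]
      -- stage reward identity
      have hstage : stageRewardG1 n α β γ₁ γ₂ θ i e a'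
          = utilN n α β γ₁ γ₂ θ i e (Function.update (fun j => x j t e) i ai.1)
            + θ i * ((ai.2 : ℝ) - (ai.1 : ℝ)) := by
        simp only [stageRewardG1, utilN, hsum1, ha'i, Function.update_self]
        ring
      have hNE' := hNE t e ai.1 hd
      have hcast2 : (ai.2 : ℝ) ≤ (b i : ℝ) + (ai.1 : ℝ) := by
        exact_mod_cast hhi
      rw [Fval]
      cases k with
      | zero =>
        have hzeroval : ∀ e' ∈ E (t+1),
            Q t e e' * valueG1 n α β γ₁ γ₂ θ E Q dmax cmax π' i 0 (t+1) e' b'' = 0 := by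
          intro e' _; simp [valueG1]
        rw [Finset.sum_congr rfl hzeroval, Finset.sum_const, smul_zero]
        have hF0 : ∀ e' ∈ E (t+1),
            Q t e e' * Fval n α β γ₁ γ₂ θ E Q x i 0 (t+1) e' = 0 := by
          intro e' _; simp [Fval]
        rw [Finset.sum_congr rfl hF0, Finset.sum_const, smul_zero]
        have hθb : θ i * ((ai.2:ℝ) - (ai.1:ℝ)) ≤ θ i * (b i : ℝ) := by
          have := hθ i
          nlinarith
        rw [hstage]
        linarith
      | succ m =>
        have htlt : t < T := by omega
        have hih : ∀ e' ∈ E (t+1),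
            Q t e e' * valueG1 n α β γ₁ γ₂ θ E Q dmax cmax π' i (m+1) (t+1) e' b''
              ≤ Q t e e' * (θ i * (b'' i : ℝ) + Fval n α β γ₁ γ₂ θ E Q x i (m+1) (t+1) e') := by
          intro e' he'
          exact mul_le_mul_of_nonneg_left
            (ih (t+1) (by omega) (by omega) e' he' b'' hb''le)
            (hQnn t h1 htlt e he e' he')
        have hsumle := Finset.sum_le_sum hih
        have hsplit : ∑ e' ∈ E (t+1), Q t e e' *
            (θ i * (b'' i : ℝ) + Fval n α β γ₁ γ₂ θ E Q x i (m+1) (t+1) e')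
            = θ i * (b'' i : ℝ)
              + ∑ e' ∈ E (t+1), Q t e e' * Fval n α β γ₁ γ₂ θ E Q x i (m+1) (t+1) e' := by
          rw [Finset.sum_congr rfl (fun e' _ => mul_add (Q t e e') _ _),
            Finset.sum_add_distrib, ← Finset.sum_mul, hQrow t h1 htlt e he, one_mul]
        have hb''cast : ((b'' i : ℕ) : ℝ) = (b i : ℝ) + (ai.1 : ℝ) - (ai.2 : ℝ) := by
          rw [hb''i]
          have : (b i + ai.1 - ai.2 : ℕ) = b i + ai.1 - ai.2 := rfl
          rw [Nat.cast_sub hhi]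
          push_cast
          ring
        rw [hstage]
        rw [hsplit, hb''cast] at hsumle
        linarith
    calc ∑ ai ∈ (actionBox (dmax i) (cmax i)).filter
          (fun a => feasibleAct (dmax i) (bmax i) (cmax i) (b i) a),
          πi t e (b i) ai *
            (stageRewardG1 n α β γ₁ γ₂ θ i e
                (Function.update (fun j => (x j t e, x j t e + b j)) i ai)
              + ∑ e' ∈ E (t + 1), Q t e e' *
                  valueG1 n α β γ₁ γ₂ θ E Q dmax cmax π' i k (t + 1) e'
                    (fun j => b j + ((Function.update (fun j => (x j t e, x j t e + b j)) i ai) j).1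
                      - ((Function.update (fun j => (x j t e, x j t e + b j)) i ai) j).2))
        ≤ ∑ ai ∈ (actionBox (dmax i) (cmax i)).filter
          (fun a => feasibleAct (dmax i) (bmax i) (cmax i) (b i) a),
          πi t e (b i) ai * (θ i * (b i : ℝ) + Fval n α β γ₁ γ₂ θ E Q x i (k+1) t e) := by
          refine Finset.sum_le_sum fun ai hai => ?_
          exact mul_le_mul_of_nonneg_left (hbound ai hai) (hnn ai)
      _ = θ i * (b i : ℝ) + Fval n α β γ₁ γ₂ θ E Q x i (k+1) t e := by
          rw [← Finset.sum_mul, hsum, one_mul]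

/-- Theorem 1 of the paper: the lower-level Markov game `G1` has a pure private
Markovian equilibrium of the form `π*_i(t, e, b_i) = (d*_i(t, e), d*_i(t, e) + b_i)`,
where the equilibrium demand depends only on time and the public state: no player can
improve their time-1 value from any initial state by unilaterally switching to any other
behavioral private Markovian strategy. -/
theorem stmt_15 (T n : ℕ) (hT : 1 ≤ T) (hn : 1 ≤ n)
    (α β γ₁ γ₂ : ℝ) (hα : 0 < α) (hβ : 0 < β) (hγ₁ : 0 < γ₁) (hγ₂ : 0 < γ₂)
    (θ : Fin n → ℝ) (hθ : ∀ i, 0 < θ i)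
    (E : ℕ → Finset ℝ)
    (hEne : ∀ t, 1 ≤ t → t ≤ T → (E t).Nonempty)
    (hEpos : ∀ t, 1 ≤ t → t ≤ T → ∀ e ∈ E t, (0:ℝ) < e)
    (Q : ℕ → ℝ → ℝ → ℝ)
    (hQnn : ∀ t, 1 ≤ t → t < T → ∀ e ∈ E t, ∀ e' ∈ E (t + 1), 0 ≤ Q t e e')
    (hQrow : ∀ t, 1 ≤ t → t < T → ∀ e ∈ E t, (∑ e' ∈ E (t + 1), Q t e e') = 1)
    (dmax bmax cmax : Fin n → ℕ) (hcmax : ∀ i, dmax i + bmax i ≤ cmax i) :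
    ∃ x : Fin n → ℕ → ℝ → ℕ,
      (∀ i t e, x i t e ≤ dmax i) ∧
      ∀ (i : Fin n) (πi : ℕ → ℝ → ℕ → ℕ × ℕ → ℝ),
        IsPMS T n E dmax bmax cmax i πi →
        ∀ e1 ∈ E 1, ∀ b1 : Fin n → ℕ, (∀ j, b1 j ≤ bmax j) →
          valueG1 n α β γ₁ γ₂ θ E Q dmax cmax
              (Function.update (fun j => purePMS (x j)) i πi) i T 1 e1 b1
            ≤ valueG1 n α β γ₁ γ₂ θ E Q dmax cmax (fun j => purePMS (x j)) i T 1 e1 b1 := by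
  classical
  -- an exact-potential argmax gives a pure equilibrium of each stage game
  have hex : ∀ e : ℝ, ∃ d ∈ Fintype.piFinset (fun j => Finset.range (dmax j + 1)),
      ∀ d' ∈ Fintype.piFinset (fun j => Finset.range (dmax j + 1)),
        potG1 n α β γ₁ γ₂ θ e d' ≤ potG1 n α β γ₁ γ₂ θ e d := by
    intro e
    refine Finset.exists_max_image _ _ ⟨fun _ => 0, ?_⟩
    rw [Fintype.mem_piFinset]
    intro j
    simp
  choose ds hmem hmax using hex
  refine ⟨fun i t e => ds e i, ?_, ?_⟩
  · intro i t e
    have := (Fintype.mem_piFinset.mp (hmem e)) i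
    rw [Finset.mem_range] at this
    show ds e i ≤ dmax i
    omega
  intro i πi hπ e1 he1 b1 hb1
  set x : Fin n → ℕ → ℝ → ℕ := fun i t e => ds e i with hxdef
  have hx : ∀ j t e, x j t e ≤ dmax j := by
    intro j t e
    have := (Fintype.mem_piFinset.mp (hmem e)) j
    rw [Finset.mem_range] at this
    show ds e j ≤ dmax j
    omega
  have hNE : ∀ (t : ℕ) (e : ℝ) (m : ℕ), m ≤ dmax i →
      utilN n α β γ₁ γ₂ θ i e (Function.update (fun j => x j t e) i m)
        ≤ utilN n α β γ₁ γ₂ θ i e (fun j => x j t e) := by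
    intro t e m hm
    have heq : (fun j => x j t e) = ds e := by funext j; rfl
    rw [heq]
    have hupd : Function.update (ds e) i m ∈
        Fintype.piFinset (fun j => Finset.range (dmax j + 1)) := by
      rw [Fintype.mem_piFinset]
      intro j
      by_cases hj : j = i
      · subst hj; rw [Function.update_self, Finset.mem_range]; omega
      · rw [Function.update_of_ne hj]; exact (Fintype.mem_piFinset.mp (hmem e)) j
    have hpot := hmax e (Function.update (ds e) i m) hupd
    have hdiff := potG1_diff n α β γ₁ γ₂ θ e (ds e) i m
    linarith
  have hdev := devValueG1 T n α β γ₁ γ₂ θ (fun j => (hθ j).le) E Q hQnn hQrow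
    dmax bmax cmax hcmax x hx i hNE πi hπ T 1 le_rfl (by omega) e1 he1 b1 hb1
  have hpure := pureValueG1 n α β γ₁ γ₂ θ E Q dmax bmax cmax hcmax x hx i T 1 e1 b1 hb1
  rw [hpure, if_neg (by omega)]
  exact hdev
end
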